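/- Let X₁, …, Xₙ ∈ ℝ be data points and let H = ∪_{k,l=1}^{K'} ∪_{i=1}^{n} {c ∈ ℝ^{K'} : X_i = (c_k + c_l)/2}. Let c ∈ ℝ^{K'} \ H have pairwise distinct coordinates. Then the k-means objective W_n is differentiable at c, with partial derivatives ∂W_n(c)/∂c_k = ∑_{i ∈ C_k(c)} (c_k − X_i), where C_k(c) = {i : |X_i − c_k| < |X_i − c_l| for all l ≠ k} is the set of indices of data points strictly closest to c_k (this set is well defined since c ∉ H and the coordinates of c are distinct). -/

import Mathlib

open scoped Classical

/-- The k-means objective for data `X₁,…,Xₙ ∈ ℝ` and centers `c ∈ ℝ^{K'}`: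
`W_n(c) = (1/2)·∑ᵢ min_k (c_k − X_i)²`. -/
noncomputable def Wn (n K' : ℕ) (X : Fin n → ℝ) (c : Fin K' → ℝ) : ℝ :=
  (1 / 2) * ∑ i, ⨅ k, (c k - X i) ^ 2

/-- away from the set `H` of center vectors for which some data
point lies on a cluster boundary, and for centers with pairwise distinct
coordinates, `W_n` is differentiable with
`∂W_n(c)/∂c_k = ∑_{i ∈ C_k(c)} (c_k − X_i)`, where `C_k(c)` is the set of data
points strictly closest to `c_k`. -/
theorem stmt8 (n K' : ℕ) (hK' : 0 < K') (X : Fin n → ℝ) (c : Fin K' → ℝ)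
    (hcH : ∀ (k l : Fin K') (i : Fin n), X i ≠ (c k + c l) / 2)
    (hinj : Function.Injective c) :
    DifferentiableAt ℝ (Wn n K' X) c ∧
    ∀ k : Fin K',
      fderiv ℝ (Wn n K' X) c (Pi.single k 1) =
        ∑ i ∈ Finset.univ.filter
            (fun i : Fin n => ∀ l, l ≠ k → |X i - c k| < |X i - c l|),
          (c k - X i) := by
  haveI : Nonempty (Fin K') := ⟨⟨0, hK'⟩⟩
  -- unique closest center for each data point
  have hex : ∀ i : Fin n, ∃ k : Fin K', ∀ l, l ≠ k → |X i - c k| < |X i - c l| := by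
    intro i
    obtain ⟨k, -, hk⟩ := Finset.exists_min_image Finset.univ
      (fun k => |X i - c k|) ⟨⟨0, hK'⟩, Finset.mem_univ _⟩
    refine ⟨k, fun l hl => lt_of_le_of_ne (hk l (Finset.mem_univ l)) ?_⟩
    intro heq
    rcases abs_eq_abs.mp heq.symm with h | h
    · exact hl (hinj (by linarith))
    · exact hcH k l i (by linarith)
  choose k0 hk0 using hex
  set F : (Fin K' → ℝ) → ℝ := fun c' => (1 / 2) * ∑ i, (c' (k0 i) - X i) ^ 2 with hF
  -- eventual equality
  have hev : ∀ᶠ c' in nhds c, ∀ i l, (c' (k0 i) - X i) ^ 2 ≤ (c' l - X i) ^ 2 := by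
    rw [Filter.eventually_all]
    intro i
    rw [Filter.eventually_all]
    intro l
    rcases eq_or_ne l (k0 i) with rfl | hl
    · exact Filter.Eventually.of_forall fun _ => le_rfl
    · have h1 : Continuous fun c' : Fin K' → ℝ => (c' (k0 i) - X i) ^ 2 := by continuity
      have h2 : Continuous fun c' : Fin K' → ℝ => (c' l - X i) ^ 2 := by continuity
      have hlt : (c (k0 i) - X i) ^ 2 < (c l - X i) ^ 2 := by
        have := hk0 i l hl
        nlinarith [sq_abs (X i - c (k0 i)), sq_abs (X i - c l), abs_nonneg (X i - c (k0 i)),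
          abs_nonneg (X i - c l)]
      exact (h1.continuousAt.eventually_lt h2.continuousAt hlt).mono fun _ h => le_of_lt h
  have heq : Wn n K' X =ᶠ[nhds c] F := by
    refine hev.mono fun c' h => ?_
    unfold Wn
    rw [hF]
    congr 1
    refine Finset.sum_congr rfl fun i _ => ?_
    refine le_antisymm (ciInf_le ⟨0, ?_⟩ (k0 i)) (le_ciInf (h i))
    rintro x ⟨k, rfl⟩
    positivity
  -- derivative of F
  set L : (Fin K' → ℝ) →L[ℝ] ℝ :=
    (1 / 2 : ℝ) • ∑ i, ((2 : ℝ) * (c (k0 i) - X i)) • ContinuousLinearMap.proj (k0 i) with hL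
  have hFL : HasFDerivAt F L c := by
    have h1 : ∀ i : Fin n, HasFDerivAt (fun c' : Fin K' → ℝ => (c' (k0 i) - X i) ^ 2)
        (((2 : ℝ) * (c (k0 i) - X i)) • (ContinuousLinearMap.proj (k0 i) :
          (Fin K' → ℝ) →L[ℝ] ℝ)) c := by
      intro i
      have hp := (ContinuousLinearMap.proj (k0 i) :
        (Fin K' → ℝ) →L[ℝ] ℝ).hasFDerivAt (x := c)
      have hsub := hp.sub_const (X i)
      have hm := hsub.mul hsub
      have hcoef : ((2 : ℝ) * (c (k0 i) - X i)) • (ContinuousLinearMap.proj (k0 i) :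
          (Fin K' → ℝ) →L[ℝ] ℝ) =
          ((ContinuousLinearMap.proj (k0 i) : (Fin K' → ℝ) →L[ℝ] ℝ) c - X i) •
            (ContinuousLinearMap.proj (k0 i) : (Fin K' → ℝ) →L[ℝ] ℝ) +
          ((ContinuousLinearMap.proj (k0 i) : (Fin K' → ℝ) →L[ℝ] ℝ) c - X i) •
            (ContinuousLinearMap.proj (k0 i) : (Fin K' → ℝ) →L[ℝ] ℝ) := by
        rw [two_mul, add_smul]
        rfl
      rw [hcoef]
      simpa [pow_two, Pi.mul_def] using hm
    have hs := HasFDerivAt.sum (fun i (_ : i ∈ Finset.univ) => h1 i)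
    have := hs.const_mul (1 / 2 : ℝ)
    simpa [hF, hL, smul_smul] using this
  have hW : HasFDerivAt (Wn n K' X) L c := hFL.congr_of_eventuallyEq heq
  refine ⟨hW.differentiableAt, fun k => ?_⟩
  rw [hW.fderiv]
  have hset : Finset.univ.filter
      (fun i : Fin n => ∀ l, l ≠ k → |X i - c k| < |X i - c l|) =
      Finset.univ.filter (fun i : Fin n => k0 i = k) := by
    ext i
    simp only [Finset.mem_filter, Finset.mem_univ, true_and]
    constructor
    · intro h
      by_contra hne
      exact lt_asymm (h (k0 i) hne) (hk0 i k (Ne.symm hne))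
    · rintro rfl
      exact hk0 i
  rw [hset, hL]
  simp only [ContinuousLinearMap.smul_apply, ContinuousLinearMap.sum_apply,
    ContinuousLinearMap.proj_apply, Pi.single_apply, smul_eq_mul, mul_ite, mul_one, mul_zero]
  rw [Finset.mul_sum, Finset.sum_filter]
  refine Finset.sum_congr rfl fun i _ => ?_
  split_ifs with h
  · rw [h]; ring
  · ring
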